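/- Let s ∈ (0, 1/2) and let g(z) = Γ(2s−z) Γ(z+1)/Γ(2s) − sin(π(s−z))/sin(πs). Then there exists M > 0 (possibly depending on s) such that g has no zeros in the region {z ∈ ℂ : Re z ∈ (0, 2s) and Im z ∈ [0,M]}. -/

import Mathlib

/-!
Multiplying by `2s - z` turns `g` into
`h(z) = Γ(2s-z+1) Γ(z+1) / Γ(2s) - (2s-z) sin(π(s-z)) / sin(πs)`,
which is holomorphic on a neighbourhood of the segment `[0, 2s]` (where `g` has a pole at `2s`).
On `(0, 2s]` the function `h` is real and positive: log-convexity of `Γ` gives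
`Γ(2s-x) Γ(x+1) ≥ Γ(2s) Γ(1)`, while `sin(π(s-x)) < sin(πs)` because `s ≤ 1/2`.
So `h` has no zeros near any point of `(0, 2s]`; near `0`, where `h(0) = 0`, its zeros are isolated
because `h` is analytic and does not vanish on `(0, 2s]`. Compactness of `[0, 2s]` turns these
neighbourhoods into a strip of uniform height.
-/

noncomputable def gFun (s : ℝ) (z : ℂ) : ℂ :=
  Complex.Gamma (2 * s - z) * Complex.Gamma (z + 1) / Complex.Gamma (2 * s) -
    Complex.sin (Real.pi * (s - z)) / Complex.sin (Real.pi * s)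

open Set Filter Topology Metric

theorem ConvexOn.map_add_map_le_of_add_eq {s : Set ℝ} {f : ℝ → ℝ} (hf : ConvexOn ℝ s f)
    {a b c d : ℝ} (ha : a ∈ s) (hb : b ∈ s) (hac : a ≤ c) (hcb : c ≤ b) (hsum : c + d = a + b) :
    f c + f d ≤ f a + f b := by
  rcases hac.eq_or_lt with rfl | hac
  · obtain rfl : d = b := by linarith
    rfl
  set t := (b - c) / (b - a)
  have hba : 0 < b - a := by linarith
  have ht0 : 0 ≤ t := div_nonneg (by linarith) hba.le
  have ht1 : t ≤ 1 := (div_le_one hba).2 (by linarith)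
  have hc : t * a + (1 - t) * b = c := by
    simp only [t]; field_simp; ring
  have hd : (1 - t) * a + t * b = d := by linear_combination -hc - hsum
  have h₁ := hf.2 ha hb ht0 (sub_nonneg.2 ht1) (by ring)
  have h₂ := hf.2 ha hb (sub_nonneg.2 ht1) ht0 (by ring)
  simp only [smul_eq_mul, hc, hd] at h₁ h₂
  linarith

theorem Real.Gamma_mul_Gamma_le_of_add_eq {a b c d : ℝ} (ha : 0 < a) (hac : a ≤ c) (hcb : c ≤ b)
    (hsum : c + d = a + b) : Gamma c * Gamma d ≤ Gamma a * Gamma b := by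
  have hpos : ∀ {x}, a ≤ x → 0 < Gamma x := fun hx => Gamma_pos_of_pos (ha.trans_le hx)
  have hc := hpos hac
  have hd := hpos (show a ≤ d by linarith)
  have hb := hpos (hac.trans hcb)
  have hlog := convexOn_log_Gamma.map_add_map_le_of_add_eq (mem_Ioi.2 ha)
    (mem_Ioi.2 (ha.trans_le (hac.trans hcb))) hac hcb hsum
  simp only [Function.comp_apply, ← log_mul hc.ne' hd.ne',
    ← log_mul (hpos le_rfl).ne' hb.ne'] at hlog
  exact (log_le_log_iff (mul_pos hc hd) (mul_pos (hpos le_rfl) hb)).1 hlog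

theorem Complex.differentiableAt_Gamma_of_re_pos {w : ℂ} (hw : 0 < w.re) :
    DifferentiableAt ℂ Gamma w :=
  differentiableAt_Gamma w fun m h => by
    rw [h, neg_re, natCast_re, neg_pos] at hw
    exact hw.not_ge m.cast_nonneg

theorem Complex.exists_forall_abs_im_lt_of_eventually_nhds_Icc {p : ℂ → Prop} {a b : ℝ}
    (h : ∀ x ∈ Icc a b, ∀ᶠ z in 𝓝 (x : ℂ), p z) :
    ∃ M > 0, ∀ z : ℂ, z.re ∈ Icc a b → |z.im| < M → p z := by
  have hK : IsCompact ((↑) '' Icc a b : Set ℂ) := isCompact_Icc.image continuous_ofReal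
  have hp : {z | p z} ∈ 𝓝ˢ ((↑) '' Icc a b : Set ℂ) := by
    rw [mem_nhdsSet_iff_forall]
    rintro _ ⟨x, hx, rfl⟩
    exact h x hx
  obtain ⟨M, hM, hsub⟩ := (mem_nhdsSet_iff hK).1 hp
  refine ⟨M, hM, fun z hre him => hsub (mem_thickening_iff.2 ⟨z.re, mem_image_of_mem _ hre, ?_⟩)⟩
  rwa [dist_of_re_eq (ofReal_re _).symm, ofReal_im, Real.dist_0_eq_abs]

noncomputable def gFunReg (s : ℝ) (z : ℂ) : ℂ :=
  Complex.Gamma (2 * s - z + 1) * Complex.Gamma (z + 1) / Complex.Gamma (2 * s) -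
    (2 * s - z) * Complex.sin (Real.pi * (s - z)) / Complex.sin (Real.pi * s)

section
variable {s : ℝ}

theorem sub_mul_gFun {z : ℂ} (hz : 2 * s - z ≠ 0) : (2 * s - z) * gFun s z = gFunReg s z := by
  rw [gFun, gFunReg, Complex.Gamma_add_one _ hz]
  ring

theorem gFunReg_ofReal (x : ℝ) : gFunReg s x = ↑(Real.Gamma (2 * s - x + 1) * Real.Gamma (x + 1) /
    Real.Gamma (2 * s) - (2 * s - x) * Real.sin (Real.pi * (s - x)) / Real.sin (Real.pi * s)) := by
  simp [gFunReg, ← Complex.Gamma_ofReal]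

theorem mul_sin_div_sin_lt_Gamma_mul_Gamma_div (hs0 : 0 < s) (hs1 : s ≤ 1 / 2) {x : ℝ}
    (hx0 : 0 < x) (hx : x ≤ 2 * s) :
    (2 * s - x) * Real.sin (Real.pi * (s - x)) / Real.sin (Real.pi * s) <
      Real.Gamma (2 * s - x + 1) * Real.Gamma (x + 1) / Real.Gamma (2 * s) := by
  have hpi := Real.pi_pos
  have hsin : 0 < Real.sin (Real.pi * s) :=
    Real.sin_pos_of_pos_of_lt_pi (by positivity) (by nlinarith)
  have hG : 0 < Real.Gamma (2 * s) := Real.Gamma_pos_of_pos (by linarith)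
  rcases hx.eq_or_lt with rfl | hx
  · simp only [sub_self, zero_add, zero_mul, zero_div, Real.Gamma_one, one_mul]
    exact div_pos (Real.Gamma_pos_of_pos (by linarith)) hG
  have hsx : 0 < 2 * s - x := by linarith
  have hsin_lt : Real.sin (Real.pi * (s - x)) < Real.sin (Real.pi * s) :=
    Real.strictMonoOn_sin ⟨by nlinarith, by nlinarith⟩ ⟨by nlinarith, by nlinarith⟩ (by nlinarith)
  have hGamma : Real.Gamma (2 * s) ≤ Real.Gamma (2 * s - x) * Real.Gamma (x + 1) := by
    simpa using Real.Gamma_mul_Gamma_le_of_add_eq (d := 1) hsx (by linarith) (by linarith)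
      (by ring)
  calc (2 * s - x) * Real.sin (Real.pi * (s - x)) / Real.sin (Real.pi * s)
      < 2 * s - x := by rw [div_lt_iff₀ hsin]; exact mul_lt_mul_of_pos_left hsin_lt hsx
    _ ≤ (2 * s - x) * (Real.Gamma (2 * s - x) * Real.Gamma (x + 1)) / Real.Gamma (2 * s) := by
      rw [le_div_iff₀ hG]; exact mul_le_mul_of_nonneg_left hGamma hsx.le
    _ = _ := by rw [Real.Gamma_add_one hsx.ne', mul_assoc]

theorem gFunReg_ofReal_ne_zero (hs0 : 0 < s) (hs1 : s ≤ 1 / 2) {x : ℝ} (hx0 : 0 < x)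
    (hx : x ≤ 2 * s) : gFunReg s x ≠ 0 := by
  rw [gFunReg_ofReal, Complex.ofReal_ne_zero, sub_ne_zero]
  exact (mul_sin_div_sin_lt_Gamma_mul_Gamma_div hs0 hs1 hx0 hx).ne'

theorem differentiableAt_gFunReg {z : ℂ} (hz₁ : -1 < z.re) (hz₂ : z.re < 2 * s + 1) :
    DifferentiableAt ℂ (gFunReg s) z := by
  have h₁ : DifferentiableAt ℂ (fun w : ℂ => Complex.Gamma (2 * s - w + 1)) z :=
    (Complex.differentiableAt_Gamma_of_re_pos (by
      simp only [Complex.add_re, Complex.sub_re, Complex.mul_re, Complex.re_ofNat, Complex.im_ofNat,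
        Complex.ofReal_re, Complex.ofReal_im, Complex.one_re]
      linarith)).comp z (by fun_prop)
  have h₂ : DifferentiableAt ℂ (fun w : ℂ => Complex.Gamma (w + 1)) z :=
    (Complex.differentiableAt_Gamma_of_re_pos (by
      rw [Complex.add_re, Complex.one_re]; linarith)).comp z (by fun_prop)
  unfold gFunReg
  fun_prop

theorem eventually_gFunReg_ne_zero_nhdsNE_zero (hs0 : 0 < s) (hs1 : s ≤ 1 / 2) :
    ∀ᶠ z in 𝓝[≠] 0, gFunReg s z ≠ 0 := by
  have hana : AnalyticAt ℂ (gFunReg s) 0 := by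
    rw [Complex.analyticAt_iff_eventually_differentiableAt]
    have hopen : IsOpen {z : ℂ | -1 < z.re ∧ z.re < 2 * s + 1} :=
      (isOpen_lt continuous_const Complex.continuous_re).inter
        (isOpen_lt Complex.continuous_re continuous_const)
    filter_upwards [hopen.mem_nhds ⟨by norm_num, by rw [Complex.zero_re]; linarith⟩] with z hz
    exact differentiableAt_gFunReg hz.1 hz.2
  refine hana.eventually_eq_zero_or_eventually_ne_zero.resolve_left fun hzero => ?_
  have hreal : ∀ᶠ x : ℝ in 𝓝[>] 0, gFunReg s x ≠ 0 := by
    filter_upwards [Ioo_mem_nhdsGT (by linarith : (0 : ℝ) < 2 * s)] with x hx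
    exact gFunReg_ofReal_ne_zero hs0 hs1 hx.1 hx.2.le
  have hofReal : Tendsto (fun x : ℝ => (x : ℂ)) (𝓝[>] 0) (𝓝 0) :=
    (Complex.continuous_ofReal.tendsto' 0 0 Complex.ofReal_zero).mono_left nhdsWithin_le_nhds
  obtain ⟨x, hx, hx'⟩ := (hreal.and (hofReal.eventually hzero)).exists
  exact hx hx'

theorem eventually_nhds_ofReal_gFunReg_ne_zero (hs0 : 0 < s) (hs1 : s ≤ 1 / 2) {x : ℝ}
    (hx : x ∈ Icc 0 (2 * s)) : ∀ᶠ z in 𝓝 (x : ℂ), 0 < z.re → gFunReg s z ≠ 0 := by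
  rcases hx.1.eq_or_lt with rfl | hx0
  · filter_upwards [eventually_nhdsWithin_iff.1 (eventually_gFunReg_ne_zero_nhdsNE_zero hs0 hs1)]
      with z hz hre
    exact hz (ne_of_apply_ne Complex.re hre.ne')
  · have hcont : ContinuousAt (gFunReg s) x := (differentiableAt_gFunReg
      (by rw [Complex.ofReal_re]; linarith) (by rw [Complex.ofReal_re]; linarith [hx.2])).continuousAt
    filter_upwards [hcont.eventually_ne (gFunReg_ofReal_ne_zero hs0 hs1 hx0 hx.2)] with z hz _
    exact hz

end

theorem gFun_no_zeros_low_s (s : ℝ) (hs : s ∈ Set.Ioo (0 : ℝ) (1/2)) :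
    ∃ M > 0, ∀ z : ℂ, z.re ∈ Set.Ioo (0 : ℝ) (2 * s) →
      z.im ∈ Set.Icc (0 : ℝ) M → gFun s z ≠ 0 := by
  obtain ⟨M, hM, hstrip⟩ := Complex.exists_forall_abs_im_lt_of_eventually_nhds_Icc
    fun x hx => eventually_nhds_ofReal_gFunReg_ne_zero hs.1 hs.2.le hx
  refine ⟨M / 2, half_pos hM, fun z hre him hzero => ?_⟩
  have hz : 2 * (s : ℂ) - z ≠ 0 :=
    sub_ne_zero.2 fun h => hre.2.ne (by simpa using congrArg Complex.re h.symm)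
  refine hstrip z (Ioo_subset_Icc_self hre) ?_ hre.1 ?_
  · rw [abs_of_nonneg him.1]; linarith [him.2]
  · rw [← sub_mul_gFun hz, hzero, mul_zero]
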